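/- Let L ≥ 2 be even and let A = {1, L}. Write n = (L+1)k + i with 0 ≤ i ≤ L. Then: if i < L and W_A(n) = I, then fI(n) = Lk + ⌈i/2⌉; if i < L and W_A(n) = II, then fII(n) = Lk + ⌈i/2⌉; and if i = L, then W_A(n) = I and fI(n) = L(k+1). -/

import Mathlib

/-- Standard NIM winner for the one-pile subtraction game with move set `A`:
`nimW A n = true` means Player I (the player to move) wins with `n` stones;
`nimW A n = false` means Player II wins.  (For `A` consisting of positive
integers this is exactly: Player I wins iff some `a ∈ A` with `a ≤ n` moves to
a Player-II-win position `n - a`.) -/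
def nimW (A : Finset ℕ) : ℕ → Bool
  | n =>
    decide (((A.filter fun a => 0 < a ∧ a ≤ n).attach.filter (fun a =>
      nimW A (n - a.1) = false)).Nonempty)
decreasing_by
  all_goals
    have h := a.2
    simp only [Finset.mem_filter] at h
    omega

/-- `fpair A n = (fI A n, fII A n)`, defined by simultaneous recursion:
for `n < min A` both are `0`; otherwise `fII n = max { fI (n-a) : a ∈ A, a ≤ n }`
(so in particular `fII n = 0` when there is no legal move), and
`fI n = min { fII (n-a) + a : a ∈ A, a ≤ n, nimW A (n-a) = false }` if `nimW A n`,
while `fI n = min { fII (n-a) + a : a ∈ A, a ≤ n, fI (n-a) = fII n }` otherwise. -/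
def fpair (A : Finset ℕ) : ℕ → ℕ × ℕ
  | n =>
    let opts := (A.filter fun a => 0 < a ∧ a ≤ n).attach
    let fIIn := (opts.image fun a => (fpair A (n - a.1)).1).max.unbotD 0
    (if nimW A n then
        ((opts.filter fun a => nimW A (n - a.1) = false).image
          fun a => (fpair A (n - a.1)).2 + a.1).min.untopD 0
      else
        ((opts.filter fun a => (fpair A (n - a.1)).1 = fIIn).image
          fun a => (fpair A (n - a.1)).2 + a.1).min.untopD 0,
     fIIn)
decreasing_by
  all_goals
    have h := a.2
    simp only [Finset.mem_filter] at h
    omega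

/-- `fI A n`: the least amount of money the player to move needs to win
(richness threshold for Player I), as defined in the paper. -/
def fI (A : Finset ℕ) (n : ℕ) : ℕ := (fpair A n).1

/-- `fII A n`: the richness threshold for the player not moving (Player II). -/
def fII (A : Finset ℕ) (n : ℕ) : ℕ := (fpair A n).2

/-! Write `n = (L+1)k + i` with `i ≤ L`. The move `1` sends `(k, i)` to `(k, i - 1)` and the move
`L` sends it to `(k - 1, i + 1)`, so, `L` being even, the player to move loses exactly when `i` is
even and `i < L`. The recursion for the winner's threshold involves the loser's threshold, so
closed forms for both `fI` and `fII` are guessed at every position and checked against the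
recursion by strong induction on `n`; position `n` only looks back at `n - 1` and `n - L`. -/

theorem untopD_min_image_eq {α β : Type*} [LinearOrder β] {s : Finset α} {f : α → β} {a : α}
    (d : β) (ha : a ∈ s) (h : ∀ b ∈ s, f a ≤ f b) : (s.image f).min.untopD d = f a := by
  rw [le_antisymm (Finset.min_le (Finset.mem_image_of_mem f ha))
    (Finset.le_min (by simpa using h))]
  rfl

theorem unbotD_max_image_eq {α β : Type*} [LinearOrder β] {s : Finset α} {f : α → β} {a : α}
    (d : β) (ha : a ∈ s) (h : ∀ b ∈ s, f b ≤ f a) : (s.image f).max.unbotD d = f a := by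
  rw [le_antisymm (Finset.max_le (by simpa using h))
    (Finset.le_max (Finset.mem_image_of_mem f ha))]
  rfl

section Recursion

variable {A : Finset ℕ} {n a : ℕ}

theorem nimW_eq_true_iff :
    nimW A n = true ↔ ∃ a ∈ A, 0 < a ∧ a ≤ n ∧ nimW A (n - a) = false := by
  rw [nimW]
  simp [Finset.filter_nonempty_iff, and_assoc]

theorem nimW_zero : nimW A 0 = false := by
  rw [Bool.eq_false_iff, ne_eq, nimW_eq_true_iff]
  rintro ⟨a, -, ha₀, han, -⟩
  omega

theorem fII_eq_of_forall_le (ha : a ∈ A) (ha₀ : 0 < a) (han : a ≤ n)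
    (hmax : ∀ b ∈ A, 0 < b → b ≤ n → fI A (n - b) ≤ fI A (n - a)) :
    fII A n = fI A (n - a) := by
  rw [fII, fpair]
  exact unbotD_max_image_eq (f := fun b : {b // b ∈ A.filter _} => (fpair A (n - b.1)).1) 0
    (a := ⟨a, Finset.mem_filter.2 ⟨ha, ha₀, han⟩⟩) (Finset.mem_attach _ _)
    fun ⟨b, hb⟩ _ => by
      rw [Finset.mem_filter] at hb
      exact hmax b hb.1 hb.2.1 hb.2.2

theorem fI_eq_of_nimW_true (hw : nimW A n = true) (ha : a ∈ A) (ha₀ : 0 < a) (han : a ≤ n)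
    (hwa : nimW A (n - a) = false)
    (hmin : ∀ b ∈ A, 0 < b → b ≤ n → nimW A (n - b) = false →
      fII A (n - a) + a ≤ fII A (n - b) + b) :
    fI A n = fII A (n - a) + a := by
  rw [fI, fpair, if_pos hw]
  exact untopD_min_image_eq (f := fun b : {b // b ∈ A.filter _} => (fpair A (n - b.1)).2 + b.1) 0
    (a := ⟨a, Finset.mem_filter.2 ⟨ha, ha₀, han⟩⟩)
    (Finset.mem_filter.2 ⟨Finset.mem_attach _ _, hwa⟩)
    fun ⟨b, hb⟩ hb' => by
      rw [Finset.mem_filter] at hb hb'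
      exact hmin b hb.1 hb.2.1 hb.2.2 hb'.2

theorem fI_eq_of_nimW_false (hw : nimW A n = false) (ha : a ∈ A) (ha₀ : 0 < a) (han : a ≤ n)
    (hfa : fI A (n - a) = fII A n)
    (hmin : ∀ b ∈ A, 0 < b → b ≤ n → fI A (n - b) = fII A n →
      fII A (n - a) + a ≤ fII A (n - b) + b) :
    fI A n = fII A (n - a) + a := by
  generalize hII : fII A n = m at hfa hmin
  rw [fII, fpair] at hII
  dsimp only at hII
  rw [fI, fpair, if_neg (by simp [hw])]
  dsimp only
  rw [hII]
  exact untopD_min_image_eq (f := fun b : {b // b ∈ A.filter _} => (fpair A (n - b.1)).2 + b.1) 0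
    (a := ⟨a, Finset.mem_filter.2 ⟨ha, ha₀, han⟩⟩)
    (Finset.mem_filter.2 ⟨Finset.mem_attach _ _, hfa⟩)
    fun ⟨b, hb⟩ hb' => by
      rw [Finset.mem_filter] at hb hb'
      exact hmin b hb.1 hb.2.1 hb.2.2 hb'.2

theorem fpair_zero : fpair A 0 = (0, 0) := by
  rw [fpair, Finset.attach_eq_empty_iff.2 (Finset.filter_false_of_mem fun a _ h => by omega)]
  simp

end Recursion

section OneL

variable {L n : ℕ}

theorem nimW_one_L_of_lt (h₁ : 1 ≤ n) (hn : n < L) : nimW {1, L} n = !nimW {1, L} (n - 1) := by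
  rw [Bool.eq_iff_iff, nimW_eq_true_iff]
  simp only [Finset.mem_insert, Finset.mem_singleton, exists_eq_or_imp, exists_eq_left]
  grind

theorem nimW_one_L_of_le (hL : 0 < L) (hn : L ≤ n) :
    nimW {1, L} n = (!nimW {1, L} (n - 1) || !nimW {1, L} (n - L)) := by
  rw [Bool.eq_iff_iff, nimW_eq_true_iff]
  simp only [Finset.mem_insert, Finset.mem_singleton, exists_eq_or_imp, exists_eq_left]
  grind

theorem fII_one_L_of_lt (h₁ : 1 ≤ n) (hn : n < L) : fII {1, L} n = fI {1, L} (n - 1) :=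
  fII_eq_of_forall_le (by simp) one_pos h₁ (by simp; omega)

theorem fI_one_L_of_lt (h₁ : 1 ≤ n) (hn : n < L) : fI {1, L} n = fII {1, L} (n - 1) + 1 := by
  cases hw : nimW {1, L} n
  · exact fI_eq_of_nimW_false hw (by simp) one_pos h₁ (fII_one_L_of_lt h₁ hn).symm
      (by simp; omega)
  · refine fI_eq_of_nimW_true hw (by simp) one_pos h₁ ?_ (by simp; omega)
    simpa [nimW_one_L_of_lt h₁ hn] using hw

theorem fII_one_L_of_le (hL : 0 < L) (hn : L ≤ n) :
    fII {1, L} n = max (fI {1, L} (n - 1)) (fI {1, L} (n - L)) := by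
  rcases le_total (fI {1, L} (n - 1)) (fI {1, L} (n - L)) with h | h
  · rw [max_eq_right h]
    exact fII_eq_of_forall_le (by simp) hL hn (by simp [h])
  · rw [max_eq_left h]
    exact fII_eq_of_forall_le (by simp) one_pos (by omega) (by simp [h])

end OneL

/-- `closedFI L k i` and `closedFII L k i` are the values of `fI` and `fII` at `(L+1)k + i`, for
`i ≤ L`. -/
def closedFI (L k i : ℕ) : ℕ :=
  if i = L then L * (k + 1)
  else if k = 0 then (i + 1) / 2
  else if i % 2 = 1 then L * k + (i + 1) / 2
  else L * k + i / 2 + 1 - L / 2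

def closedFII (L k i : ℕ) : ℕ :=
  if i = L then L * k + L / 2
  else if k = 0 then i / 2
  else if i % 2 = 1 then L * k + (i + 1) / 2 - L / 2
  else L * k + i / 2

def ClosedFormAt (L n k i : ℕ) : Prop :=
  nimW {1, L} n = decide (i % 2 = 1 ∨ i = L) ∧
    fI {1, L} n = closedFI L k i ∧ fII {1, L} n = closedFII L k i

section ClosedForm

variable {L n k i : ℕ}

theorem closedFormAt_of_lt : ∀ n < L, ClosedFormAt L n 0 n
  | 0, hL => by
    refine ⟨?_, by simp [fI, fpair_zero, closedFI], by simp [fII, fpair_zero, closedFII, hL.ne]⟩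
    rw [nimW_zero, eq_comm, decide_eq_false_iff_not]
    omega
  | n + 1, hn => by
    obtain ⟨hw, hf, hg⟩ := closedFormAt_of_lt n (by omega)
    refine ⟨?_, ?_, ?_⟩
    · rw [nimW_one_L_of_lt (by omega) hn, Nat.add_sub_cancel, hw]
      grind
    · rw [fI_one_L_of_lt (by omega) hn, Nat.add_sub_cancel, hg]
      grind [closedFI, closedFII]
    · rw [fII_one_L_of_lt (by omega) hn, Nat.add_sub_cancel, hf]
      grind [closedFI, closedFII]

theorem closedFormAt_top (hL : 2 ≤ L) (hLe : Even L) (hn : n = (L + 1) * k + L)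
    (h₁ : ClosedFormAt L (n - 1) k (L - 1)) (h₀ : ClosedFormAt L (n - L) k 0) :
    ClosedFormAt L n k L := by
  have hL₂ := Nat.even_iff.1 hLe
  obtain ⟨hw₁, hf₁, -⟩ := h₁
  obtain ⟨hw₀, hf₀, hg₀⟩ := h₀
  replace hw₁ : nimW {1, L} (n - 1) = true := by rw [hw₁, decide_eq_true_iff]; omega
  replace hw₀ : nimW {1, L} (n - L) = false := by rw [hw₀, decide_eq_false_iff_not]; omega
  have hw : nimW {1, L} n = true := by
    simp [nimW_one_L_of_le (by omega) (by omega : L ≤ n), hw₀]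
  refine ⟨by rw [hw, eq_comm, decide_eq_true_iff]; omega, ?_, ?_⟩
  · rw [fI_eq_of_nimW_true hw (by simp) (by omega) (by omega) hw₀ (by simp [hw₁]), hg₀]
    grind [closedFI, closedFII]
  · rw [fII_one_L_of_le (by omega) (by omega), hf₁, hf₀]
    grind [closedFI, closedFII]

theorem closedFormAt_odd (hLe : Even L) (hn : n = (L + 1) * (k + 1) + i)
    (hi : i % 2 = 1) (hiL : i < L)
    (h₁ : ClosedFormAt L (n - 1) (k + 1) (i - 1)) (h₂ : ClosedFormAt L (n - L) k (i + 1)) :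
    ClosedFormAt L n (k + 1) i := by
  have hL₂ := Nat.even_iff.1 hLe
  rw [mul_add_one] at hn
  obtain ⟨hw₁, hf₁, hg₁⟩ := h₁
  obtain ⟨hw₂, hf₂, hg₂⟩ := h₂
  replace hw₁ : nimW {1, L} (n - 1) = false := by rw [hw₁, decide_eq_false_iff_not]; omega
  have hw : nimW {1, L} n = true := by
    simp [nimW_one_L_of_le (by omega) (by omega : L ≤ n), hw₁]
  refine ⟨by rw [hw, eq_comm, decide_eq_true_iff]; omega, ?_, ?_⟩
  · rw [fI_eq_of_nimW_true hw (by simp) one_pos (by omega) hw₁ ?_, hg₁]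
    · grind [closedFI, closedFII]
    · simp only [Finset.mem_insert, Finset.mem_singleton, forall_eq_or_imp, forall_eq, hw₂, hg₁,
        hg₂]
      grind [closedFII]
  · rw [fII_one_L_of_le (by omega) (by omega), hf₁, hf₂]
    grind [closedFI, closedFII]

theorem closedFormAt_even (hLe : Even L) (hn : n = (L + 1) * (k + 1) + i)
    (hi : i % 2 = 0) (hiL : i < L) (hw₁ : nimW {1, L} (n - 1) = true)
    (hf₁ : fI {1, L} (n - 1) = L * (k + 1) + i / 2)
    (hg₁ : fII {1, L} (n - 1) = L * (k + 1) + i / 2 - L / 2)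
    (h₂ : ClosedFormAt L (n - L) k (i + 1)) :
    ClosedFormAt L n (k + 1) i := by
  have hL₂ := Nat.even_iff.1 hLe
  rw [mul_add_one] at hn
  obtain ⟨hw₂, hf₂, -⟩ := h₂
  replace hw₂ : nimW {1, L} (n - L) = true := by rw [hw₂, decide_eq_true_iff]; omega
  have hw : nimW {1, L} n = false := by
    simp [nimW_one_L_of_le (by omega) (by omega : L ≤ n), hw₁, hw₂]
  have hlt : fI {1, L} (n - L) < fI {1, L} (n - 1) := by
    rw [hf₁, hf₂]
    grind [closedFI]
  have hg : fII {1, L} n = fI {1, L} (n - 1) := by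
    rw [fII_one_L_of_le (by omega) (by omega), max_eq_left hlt.le]
  refine ⟨by rw [hw, eq_comm, decide_eq_false_iff_not]; omega, ?_,
    by rw [hg, hf₁]; grind [closedFII]⟩
  rw [fI_eq_of_nimW_false hw (by simp) one_pos (by omega) hg.symm (by simp [hg, hlt.ne]), hg₁]
  grind [closedFI]

theorem closedFormAt_of_eq (hL : 2 ≤ L) (hLe : Even L) :
    ∀ n k i, i ≤ L → n = (L + 1) * k + i → ClosedFormAt L n k i := by
  intro n
  induction n using Nat.strong_induction_on with
  | _ n IH =>
  intro k i hi hn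
  rcases hi.lt_or_eq with hi | hi
  · rcases k with _ | k
    · rw [mul_zero, zero_add] at hn
      subst hn
      exact closedFormAt_of_lt n hi
    have hn' : n = (L + 1) * k + L + 1 + i := by rw [hn]; ring
    have h₂ := IH (n - L) (by omega) k (i + 1) (by omega) (by omega)
    rcases Nat.mod_two_eq_zero_or_one i with he | ho
    · rcases Nat.eq_zero_or_pos i with rfl | hi₀
      · obtain ⟨hw, hf, hg⟩ := IH (n - 1) (by omega) k L le_rfl (by omega)
        exact closedFormAt_even hLe hn he hi (by rw [hw, decide_eq_true_iff]; omega)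
          (by grind [closedFI]) (by grind [closedFII]) h₂
      · obtain ⟨hw, hf, hg⟩ := IH (n - 1) (by omega) (k + 1) (i - 1) (by omega) (by omega)
        exact closedFormAt_even hLe hn he hi (by rw [hw, decide_eq_true_iff]; omega)
          (by grind [closedFI]) (by grind [closedFII]) h₂
    · exact closedFormAt_odd hLe hn ho hi
        (IH (n - 1) (by omega) (k + 1) (i - 1) (by omega) (by omega)) h₂
  · rw [hi] at hn ⊢
    exact closedFormAt_top hL hLe hn (IH (n - 1) (by omega) k (L - 1) (by omega) (by omega))
      (IH (n - L) (by omega) k 0 (by omega) (by omega))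

end ClosedForm

/-- For even `L ≥ 2` and `A = {1, L}`, write `n = (L+1)k + i` with
`0 ≤ i ≤ L`.  If `i < L` and Player I wins standard NIM then `fI n = Lk + ⌈i/2⌉`;
if `i < L` and Player II wins then `fII n = Lk + ⌈i/2⌉`; and if `i = L` then
Player I wins and `fI n = L(k+1)`.  (Here `⌈i/2⌉ = (i+1)/2` in `ℕ`.) -/
theorem f_one_L_formula (L : ℕ) (hL : 2 ≤ L) (hLeven : Even L)
    (n k i : ℕ) (hi : i ≤ L) (hn : n = (L + 1) * k + i) :
    (i < L → nimW ({1, L} : Finset ℕ) n = true →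
        fI ({1, L} : Finset ℕ) n = L * k + (i + 1) / 2) ∧
      (i < L → nimW ({1, L} : Finset ℕ) n = false →
        fII ({1, L} : Finset ℕ) n = L * k + (i + 1) / 2) ∧
      (i = L → nimW ({1, L} : Finset ℕ) n = true ∧
        fI ({1, L} : Finset ℕ) n = L * (k + 1)) := by
  obtain ⟨hw, hf, hg⟩ := closedFormAt_of_eq hL hLeven n k i hi hn
  refine ⟨fun hiL hwn => ?_, fun hiL hwn => ?_,
    fun hiL => ⟨by rw [hw, decide_eq_true_iff]; omega, ?_⟩⟩
  · simp only [hw, decide_eq_true_eq] at hwn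
    grind [closedFI]
  · simp only [hw, decide_eq_false_iff_not] at hwn
    grind [closedFII]
  · grind [closedFI]
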